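/- Let H1, H2, H3 be complex Hilbert spaces, let A ∈ L(H2,H3) and B ∈ L(H1,H3) be bounded operators with AA* ≥ BB*, and let X ∈ L(H1,H2). Then the following are equivalent: (i) AX = B and ‖X‖ ≤ 1; (ii) the 3×3 block operator [[I_{H1}, B*, X*],[B, AA*, A],[X, A*, I_{H2}]] acting on H1 ⊕ H3 ⊕ H2 is positive semidefinite. -/

import Mathlib

/-!
Completing the square, the quadratic form of the block operator at `(h₁, h₃, h₂)` equals
`‖A* h₃ + h₂ + X h₁‖² + (‖h₁‖² - ‖X h₁‖²) + 2 Re ⟪h₃, (B - AX) h₁⟫`.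
If `AX = B` and `‖X‖ ≤ 1` every term is nonnegative. Conversely, choosing `h₂` to kill the
square, `h₃ = 0` gives `‖X h₁‖ ≤ ‖h₁‖`, while `h₃ = t (B - AX) h₁` gives an affine function of
`t ∈ ℝ` with slope `2 ‖(B - AX) h₁‖²` that stays nonnegative, so `(B - AX) h₁ = 0`.
-/

open ContinuousLinearMap
open scoped InnerProductSpace ComplexOrder

lemma eq_zero_of_forall_nonneg_add_mul {a b : ℝ} (h : ∀ t : ℝ, 0 ≤ a + t * b) : b = 0 := by
  by_contra hb
  have := h (-(a + 1) / b)
  rw [div_mul_cancel₀ _ hb] at this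
  linarith

section BlockForm

variable {𝕜 H1 H2 H3 : Type*} [RCLike 𝕜]
  [NormedAddCommGroup H1] [InnerProductSpace 𝕜 H1] [CompleteSpace H1]
  [NormedAddCommGroup H2] [InnerProductSpace 𝕜 H2] [CompleteSpace H2]
  [NormedAddCommGroup H3] [InnerProductSpace 𝕜 H3] [CompleteSpace H3]
  (A : H2 →L[𝕜] H3) (B : H1 →L[𝕜] H3) (X : H1 →L[𝕜] H2)

open RCLike

/-- The quadratic form of `[[I, B*, X*], [B, AA*, A], [X, A*, I]]` on `H1 × H3 × H2`. -/
noncomputable def blockForm (h1 : H1) (h3 : H3) (h2 : H2) : 𝕜 :=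
  ⟪h1, h1 + adjoint B h3 + adjoint X h2⟫_𝕜
    + ⟪h3, B h1 + A (adjoint A h3) + A h2⟫_𝕜
    + ⟪h2, X h1 + adjoint A h3 + h2⟫_𝕜

lemma blockForm_eq (h1 : H1) (h3 : H3) (h2 : H2) :
    blockForm A B X h1 h3 h2 =
      ((‖adjoint A h3 + h2 + X h1‖ ^ 2 + (‖h1‖ ^ 2 - ‖X h1‖ ^ 2)
        + 2 * re ⟪h3, B h1 - A (X h1)⟫_𝕜 : ℝ) : 𝕜) := by
  have hsq : blockForm A B X h1 h3 h2 =
      ⟪adjoint A h3 + h2 + X h1, adjoint A h3 + h2 + X h1⟫_𝕜 + ⟪h1, h1⟫_𝕜 - ⟪X h1, X h1⟫_𝕜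
        + (⟪h3, B h1 - A (X h1)⟫_𝕜 + ⟪B h1 - A (X h1), h3⟫_𝕜) := by
    simp only [blockForm, inner_add_left, inner_add_right, inner_sub_left, inner_sub_right,
      adjoint_inner_left, adjoint_inner_right, map_add]
    rw [← adjoint_inner_left A (adjoint A h3) h3, ← adjoint_inner_right A (adjoint A h3) h3]
    ring
  rw [hsq, ← inner_conj_symm (B h1 - A (X h1)) h3, add_conj]
  simp only [inner_self_eq_norm_sq_to_K]
  push_cast
  ring

lemma blockForm_nonneg_iff (h1 : H1) (h3 : H3) (h2 : H2) :
    0 ≤ blockForm A B X h1 h3 h2 ↔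
      0 ≤ ‖adjoint A h3 + h2 + X h1‖ ^ 2 + (‖h1‖ ^ 2 - ‖X h1‖ ^ 2)
        + 2 * re ⟪h3, B h1 - A (X h1)⟫_𝕜 := by
  rw [blockForm_eq, ofReal_nonneg]

lemma blockForm_nonneg_of_comp_eq (hAX : A ∘L X = B) (hX : ‖X‖ ≤ 1)
    (h1 : H1) (h3 : H3) (h2 : H2) : 0 ≤ blockForm A B X h1 h3 h2 := by
  have hd : B h1 - A (X h1) = 0 := by rw [← hAX, comp_apply, sub_self]
  have hXh1 : ‖X h1‖ ≤ ‖h1‖ := by simpa using X.le_of_opNorm_le hX h1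
  rw [blockForm_nonneg_iff, hd, inner_zero_right, map_zero, mul_zero, add_zero]
  nlinarith [norm_nonneg (X h1)]

variable {A B X}

lemma norm_apply_le_of_blockForm_nonneg (hQ : ∀ h1 h3 h2, 0 ≤ blockForm A B X h1 h3 h2)
    (h1 : H1) : ‖X h1‖ ≤ ‖h1‖ := by
  have h := (blockForm_nonneg_iff A B X h1 0 (-X h1)).mp (hQ _ _ _)
  simp only [map_zero, zero_add, neg_add_cancel, norm_zero, inner_zero_left,
    mul_zero, add_zero] at h
  nlinarith [norm_nonneg (X h1), norm_nonneg h1]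

lemma comp_eq_of_blockForm_nonneg (hQ : ∀ h1 h3 h2, 0 ≤ blockForm A B X h1 h3 h2) :
    A ∘L X = B := by
  ext h1
  obtain ⟨d, hd_def⟩ : ∃ d, d = B h1 - A (X h1) := ⟨_, rfl⟩
  have hslope : ∀ t : ℝ, 0 ≤ (‖h1‖ ^ 2 - ‖X h1‖ ^ 2) + t * (2 * ‖d‖ ^ 2) := by
    intro t
    have h := (blockForm_nonneg_iff A B X h1 ((t : 𝕜) • d) (-adjoint A ((t : 𝕜) • d) - X h1)).mp
      (hQ _ _ _)
    rwa [← hd_def, show adjoint A ((t : 𝕜) • d) + (-adjoint A ((t : 𝕜) • d) - X h1) + X h1 = 0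
      by abel, norm_zero, inner_smul_real_left, inner_self_eq_norm_sq_to_K, real_smul_eq_coe_mul,
      ← ofReal_pow, re_ofReal_mul, ofReal_re, zero_pow two_ne_zero, zero_add,
      mul_left_comm] at h
  have hd : d = 0 := by
    simpa using eq_zero_of_forall_nonneg_add_mul hslope
  exact (sub_eq_zero.mp (hd_def ▸ hd)).symm

end BlockForm

theorem stmt0
    {H1 H2 H3 : Type*}
    [NormedAddCommGroup H1] [InnerProductSpace ℂ H1] [CompleteSpace H1]
    [NormedAddCommGroup H2] [InnerProductSpace ℂ H2] [CompleteSpace H2]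
    [NormedAddCommGroup H3] [InnerProductSpace ℂ H3] [CompleteSpace H3]
    (A : H2 →L[ℂ] H3) (B : H1 →L[ℂ] H3)
    (X : H1 →L[ℂ] H2) :
    (A ∘L X = B ∧ ‖X‖ ≤ 1) ↔
      (∀ (h1 : H1) (h3 : H3) (h2 : H2),
        0 ≤ ⟪h1, h1 + adjoint B h3 + adjoint X h2⟫_ℂ
            + ⟪h3, B h1 + A (adjoint A h3) + A h2⟫_ℂ
            + ⟪h2, X h1 + adjoint A h3 + h2⟫_ℂ) := by
  refine ⟨fun ⟨hAX, hX⟩ => blockForm_nonneg_of_comp_eq A B X hAX hX, fun hQ => ⟨?_, ?_⟩⟩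
  · exact comp_eq_of_blockForm_nonneg hQ
  · exact opNorm_le_bound X zero_le_one fun h1 => by
      simpa using norm_apply_le_of_blockForm_nonneg hQ h1
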